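/- Assume each q_i is Lipschitz continuous, let f be the bounded fractal function, and let K : ℝ × ℝ → ℝ be a kernel such that x ↦ K(x, s) is continuous and bounded on I for each fixed s. Define f̂(s) = ∫_{x_0}^{x_N} K(x, s) f(x) dx and Q̂(s) = ∫_{x_0}^{x_N} K(x, s) Q(x) dx, where Q(x) = q_i(L_i^{-1}(x)) for x ∈ I_i. Then for every s, f̂(s) = ∑_{i=1}^N a_i α_i ∫_{x_0}^{x_N} K(L_i(x), s) f(x) dx + Q̂(s). -/

import Mathlib

/-!
On `[x₀, x_N)` the bounded solution `f` of the functional equation is the pointwise limit of the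
iterates `Tⁿ 0` of the Read–Bajraktarević operator `T`, which contracts distances by
`maxᵢ |αᵢ| < 1`. The iterates are Borel measurable, hence so is `f`, and being bounded it is
integrable. The identity then follows by splitting `∫_{x₀}^{x_N}` at the nodes, substituting
`t = Lᵢ u` on each piece and using `f (Lᵢ u) = αᵢ f u + qᵢ u` and `Q (Lᵢ u) = qᵢ u`, which hold
for every `u` except `u = x_N`.
-/

open Set

noncomputable def aC (x : ℕ → ℝ) (N i : ℕ) : ℝ := (x (i + 1) - x i) / (x N - x 0)

noncomputable def bC (x : ℕ → ℝ) (N i : ℕ) : ℝ := (x N * x i - x 0 * x (i + 1)) / (x N - x 0)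

/-- The affine map `L i t = a i * t + b i`. -/
noncomputable def Lm (x : ℕ → ℝ) (N i : ℕ) (t : ℝ) : ℝ := aC x N i * t + bC x N i

/-- The inverse `L i ⁻¹ t = (t - b i) / a i` of the affine map `L i`. -/
noncomputable def LmInv (x : ℕ → ℝ) (N i : ℕ) (t : ℝ) : ℝ := (t - bC x N i) / aC x N i

open Filter Topology MeasureTheory

section Partition

variable {x : ℕ → ℝ} {N i : ℕ}

theorem x_mono_of_lt_succ (hx : ∀ i < N, x i < x (i + 1)) {i j : ℕ} (hij : i ≤ j) (hj : j ≤ N) :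
    x i ≤ x j :=
  (strictMonoOn_Iic_of_lt_succ hx).monotoneOn (hij.trans hj) hj hij

theorem Icc_subset_Icc_of_lt_succ (hx : ∀ i < N, x i < x (i + 1)) (hi : i < N) :
    Icc (x i) (x (i + 1)) ⊆ Icc (x 0) (x N) :=
  Icc_subset_Icc (x_mono_of_lt_succ hx i.zero_le hi.le) (x_mono_of_lt_succ hx hi le_rfl)

theorem x_zero_lt_x_of_lt_succ (hx : ∀ i < N, x i < x (i + 1)) (hi : i < N) : x 0 < x N :=
  (x_mono_of_lt_succ hx i.zero_le hi.le).trans_lt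
    ((hx i hi).trans_le (x_mono_of_lt_succ hx hi le_rfl))

theorem eq_of_mem_Ico_of_mem_Ico (hx : ∀ i < N, x i < x (i + 1)) {i j : ℕ} (hi : i < N)
    (hj : j < N) {t : ℝ} (hti : t ∈ Ico (x i) (x (i + 1))) (htj : t ∈ Ico (x j) (x (j + 1))) :
    i = j := by
  by_contra hne
  rcases lt_or_gt_of_ne hne with h | h
  · linarith [hti.2, htj.1, x_mono_of_lt_succ hx h hj.le]
  · linarith [htj.2, hti.1, x_mono_of_lt_succ hx h hi.le]

theorem aC_pos (h : x 0 < x N) (hi : x i < x (i + 1)) : 0 < aC x N i :=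
  div_pos (sub_pos.mpr hi) (sub_pos.mpr h)

theorem Lm_x_zero (h : x 0 ≠ x N) : Lm x N i (x 0) = x i := by
  have := sub_ne_zero.2 h.symm
  unfold Lm aC bC
  field_simp
  ring

theorem Lm_x_N (h : x 0 ≠ x N) : Lm x N i (x N) = x (i + 1) := by
  have := sub_ne_zero.2 h.symm
  unfold Lm aC bC
  field_simp
  ring

theorem LmInv_Lm (ha : aC x N i ≠ 0) (t : ℝ) : LmInv x N i (Lm x N i t) = t := by
  unfold LmInv Lm
  field_simp
  ring

theorem Lm_LmInv (ha : aC x N i ≠ 0) (t : ℝ) : Lm x N i (LmInv x N i t) = t := by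
  unfold LmInv Lm
  field_simp
  ring

theorem Lm_strictMono (ha : 0 < aC x N i) : StrictMono (Lm x N i) := fun _ _ h => by
  unfold Lm
  gcongr

theorem LmInv_strictMono (ha : 0 < aC x N i) : StrictMono (LmInv x N i) := fun _ _ h => by
  unfold LmInv
  gcongr

theorem continuous_Lm : Continuous (Lm x N i) := by
  unfold Lm
  fun_prop

theorem continuous_LmInv : Continuous (LmInv x N i) := by
  unfold LmInv
  fun_prop

theorem mapsTo_Lm_Icc (h : x 0 < x N) (hi : x i < x (i + 1)) :
    MapsTo (Lm x N i) (Icc (x 0) (x N)) (Icc (x i) (x (i + 1))) := by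
  simpa only [Lm_x_zero h.ne, Lm_x_N h.ne] using
    (Lm_strictMono (aC_pos h hi)).monotone.mapsTo_Icc (a := x 0) (b := x N)

theorem mapsTo_Lm_Ioo (h : x 0 < x N) (hi : x i < x (i + 1)) :
    MapsTo (Lm x N i) (Ioo (x 0) (x N)) (Ioo (x i) (x (i + 1))) := by
  simpa only [Lm_x_zero h.ne, Lm_x_N h.ne] using
    (Lm_strictMono (aC_pos h hi)).mapsTo_Ioo (a := x 0) (b := x N)

theorem mapsTo_LmInv_Ico (h : x 0 < x N) (hi : x i < x (i + 1)) :
    MapsTo (LmInv x N i) (Ico (x i) (x (i + 1))) (Ico (x 0) (x N)) := by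
  have ha := aC_pos h hi
  have := (LmInv_strictMono ha).mapsTo_Ico (a := Lm x N i (x 0)) (b := Lm x N i (x N))
  rwa [LmInv_Lm ha.ne', LmInv_Lm ha.ne', Lm_x_zero h.ne, Lm_x_N h.ne] at this

theorem mapsTo_LmInv_Icc (h : x 0 < x N) (hi : x i < x (i + 1)) :
    MapsTo (LmInv x N i) (Icc (x i) (x (i + 1))) (Icc (x 0) (x N)) := by
  have ha := aC_pos h hi
  have := (LmInv_strictMono ha).monotone.mapsTo_Icc (a := Lm x N i (x 0)) (b := Lm x N i (x N))
  rwa [LmInv_Lm ha.ne', LmInv_Lm ha.ne', Lm_x_zero h.ne, Lm_x_N h.ne] at this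

theorem aC_mul_integral_comp_Lm (h : x 0 ≠ x N) (g : ℝ → ℝ) :
    aC x N i * ∫ u in x 0..x N, g (Lm x N i u) = ∫ t in x i..x (i + 1), g t := by
  rw [← Lm_x_zero (i := i) h, ← Lm_x_N h, ← smul_eq_mul]
  exact intervalIntegral.smul_integral_comp_mul_add ..

end Partition

theorem tendsto_iterate_of_abs_sub_le {X : Type*} {J : Set X} {T : (X → ℝ) → X → ℝ}
    {f g : X → ℝ} {A M : ℝ} (hA₀ : 0 ≤ A) (hA₁ : A < 1)
    (hT : ∀ g, ∀ t ∈ J, ∃ u ∈ J, |T g t - f t| ≤ A * |g u - f u|)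
    (hg : ∀ t ∈ J, |g t - f t| ≤ M) {t : X} (ht : t ∈ J) :
    Tendsto (fun n => T^[n] g t) atTop (𝓝 (f t)) := by
  have hbound : ∀ n, ∀ t ∈ J, |T^[n] g t - f t| ≤ A ^ n * M := by
    intro n
    induction n with
    | zero => simpa using hg
    | succ n ih =>
      intro t ht
      obtain ⟨u, hu, hle⟩ := hT (T^[n] g) t ht
      rw [Function.iterate_succ_apply']
      calc _ ≤ A * |T^[n] g u - f u| := hle
        _ ≤ A * (A ^ n * M) := by gcongr; exact ih u hu
        _ = A ^ (n + 1) * M := by ring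
  have hlim : Tendsto (fun n => A ^ n * M) atTop (𝓝 0) := by
    simpa using (tendsto_pow_atTop_nhds_zero_of_lt_one hA₀ hA₁).mul_const M
  rw [tendsto_iff_dist_tendsto_zero]
  exact squeeze_zero (fun _ => dist_nonneg) (fun n => (Real.dist_eq _ _).trans_le (hbound n t ht))
    hlim

-- The operator `T` of the fixed-point construction, restricted to `[x₀, x_N)`.
noncomputable def rbOp (x : ℕ → ℝ) (N : ℕ) (α : ℕ → ℝ) (q : ℕ → ℝ → ℝ) (g : ℝ → ℝ) (t : ℝ) :
    ℝ :=
  ∑ i ∈ Finset.range N, (Ico (x i) (x (i + 1))).indicator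
    (fun u => α i * g (LmInv x N i u) + q i (LmInv x N i u)) t

section Operator

variable {x : ℕ → ℝ} {N : ℕ} {α : ℕ → ℝ} {q : ℕ → ℝ → ℝ}

theorem measurable_rbOp (hq : ∀ i < N, Measurable (q i)) {g : ℝ → ℝ} (hg : Measurable g) :
    Measurable (rbOp x N α q g) :=
  Finset.measurable_sum _ fun i hi => Measurable.indicator
    (((hg.comp continuous_LmInv.measurable).const_mul _).add
      ((hq i (Finset.mem_range.1 hi)).comp continuous_LmInv.measurable)) measurableSet_Ico

theorem rbOp_apply_of_mem (hx : ∀ i < N, x i < x (i + 1)) {j : ℕ} (hj : j < N) {t : ℝ}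
    (ht : t ∈ Ico (x j) (x (j + 1))) (g : ℝ → ℝ) :
    rbOp x N α q g t = α j * g (LmInv x N j t) + q j (LmInv x N j t) := by
  rw [rbOp, Finset.sum_eq_single_of_mem j (Finset.mem_range.2 hj), indicator_of_mem ht]
  exact fun i hi hij => indicator_of_notMem
    (fun hti => hij (eq_of_mem_Ico_of_mem_Ico hx (Finset.mem_range.1 hi) hj hti ht)) _

theorem exists_abs_rbOp_sub_le (hx : ∀ i < N, x i < x (i + 1)) {A : ℝ}
    (hA : ∀ i < N, |α i| ≤ A) {f : ℝ → ℝ}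
    (hfe : ∀ i < N, ∀ t ∈ Ico (x 0) (x N), f (Lm x N i t) = α i * f t + q i t)
    (g : ℝ → ℝ) {t : ℝ} (ht : t ∈ Ico (x 0) (x N)) :
    ∃ u ∈ Ico (x 0) (x N), |rbOp x N α q g t - f t| ≤ A * |g u - f u| := by
  obtain ⟨j, hxj, hj, htj⟩ : ∃ j, x j ≤ t ∧ j < N ∧ t < x (j + 1) := by
    simpa using Ico_subset_biUnion_Ico N x ht
  have h := x_zero_lt_x_of_lt_succ hx hj
  have hu : LmInv x N j t ∈ Ico (x 0) (x N) := mapsTo_LmInv_Ico h (hx j hj) ⟨hxj, htj⟩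
  have hft : f t = α j * f (LmInv x N j t) + q j (LmInv x N j t) := by
    rw [← hfe j hj _ hu, Lm_LmInv (aC_pos h (hx j hj)).ne']
  refine ⟨_, hu, ?_⟩
  rw [rbOp_apply_of_mem hx hj ⟨hxj, htj⟩, hft, add_sub_add_right_eq_sub, ← mul_sub, abs_mul]
  exact mul_le_mul_of_nonneg_right (hA j hj) (abs_nonneg _)

theorem aestronglyMeasurable_of_functional_eq (hx : ∀ i < N, x i < x (i + 1))
    (hα : ∀ i < N, |α i| < 1) (hq : ∀ i < N, ContinuousOn (q i) (Icc (x 0) (x N)))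
    {f : ℝ → ℝ} {M : ℝ} (hM : ∀ t ∈ Ico (x 0) (x N), |f t| ≤ M)
    (hfe : ∀ i < N, ∀ t ∈ Ico (x 0) (x N), f (Lm x N i t) = α i * f t + q i t) :
    AEStronglyMeasurable f (volume.restrict (Ico (x 0) (x N))) := by
  classical
  obtain ⟨A, hA₀, hA₁, hA⟩ : ∃ A : ℝ, 0 ≤ A ∧ A < 1 ∧ ∀ i < N, |α i| ≤ A := by
    refine ⟨(((Finset.range N).sup fun i => ‖α i‖₊ : NNReal) : ℝ), NNReal.coe_nonneg _, ?_,
      fun i hi => ?_⟩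
    · refine NNReal.coe_lt_one.2 ((Finset.sup_lt_iff one_pos).2 fun i hi => ?_)
      simpa [← NNReal.coe_lt_one] using hα i (Finset.mem_range.1 hi)
    · exact_mod_cast Finset.le_sup (f := fun i => ‖α i‖₊) (Finset.mem_range.2 hi)
  -- `T` needs globally measurable `q i`; only their values on `[x₀, x_N]` matter.
  set q' : ℕ → ℝ → ℝ := fun i => (Icc (x 0) (x N)).piecewise (q i) 0
  have hq' : ∀ i < N, Measurable (q' i) := fun i hi =>
    (hq i hi).measurable_piecewise continuousOn_const measurableSet_Icc
  have hfe' : ∀ i < N, ∀ t ∈ Ico (x 0) (x N), f (Lm x N i t) = α i * f t + q' i t :=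
    fun i hi t ht => by
      simp only [hfe i hi t ht, q', piecewise_eq_of_mem _ _ _ (Ico_subset_Icc_self ht)]
  have hmeas : ∀ n, Measurable ((rbOp x N α q')^[n] 0) := by
    intro n
    induction n with
    | zero => exact measurable_const
    | succ n ih => rw [Function.iterate_succ_apply']; exact measurable_rbOp hq' ih
  refine aestronglyMeasurable_of_tendsto_ae atTop (fun n => (hmeas n).aestronglyMeasurable)
    (ae_restrict_of_forall_mem measurableSet_Ico fun t ht => ?_)
  exact tendsto_iterate_of_abs_sub_le hA₀ hA₁ (exists_abs_rbOp_sub_le hx hA hfe')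
    (by simpa using hM) ht

end Operator

section Integrals

variable {x : ℕ → ℝ} {N i : ℕ} {α : ℕ → ℝ} {q : ℕ → ℝ → ℝ}

theorem intervalIntegrable_of_functional_eq (hx : ∀ i < N, x i < x (i + 1))
    (hα : ∀ i < N, |α i| < 1) (hq : ∀ i < N, ContinuousOn (q i) (Icc (x 0) (x N)))
    {f : ℝ → ℝ} (hfb : ∃ M, ∀ t ∈ Icc (x 0) (x N), |f t| ≤ M)
    (hfe : ∀ i < N, ∀ t ∈ Ico (x 0) (x N), f (Lm x N i t) = α i * f t + q i t) :
    IntervalIntegrable f volume (x 0) (x N) := by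
  obtain ⟨M, hM⟩ := hfb
  have hM' : ∀ t ∈ Ico (x 0) (x N), |f t| ≤ M := fun t ht => hM t (Ico_subset_Icc_self ht)
  have hf : IntegrableOn f (Ico (x 0) (x N)) :=
    Integrable.of_bound (aestronglyMeasurable_of_functional_eq hx hα hq hM' hfe) M
      (ae_restrict_of_forall_mem measurableSet_Ico hM')
  rw [intervalIntegrable_iff_integrableOn_Ioo_of_le (x_mono_of_lt_succ hx N.zero_le le_rfl)]
  exact hf.mono_set Ioo_subset_Ico_self

theorem intervalIntegrable_mul_of_eqOn_comp_LmInv (hx : ∀ i < N, x i < x (i + 1)) (hi : i < N)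
    {K Q : ℝ → ℝ} (hK : ContinuousOn K (Icc (x 0) (x N)))
    (hq : ContinuousOn (q i) (Icc (x 0) (x N)))
    (hQ : ∀ t ∈ Ico (x i) (x (i + 1)), Q t = q i (LmInv x N i t)) :
    IntervalIntegrable (fun t => K t * Q t) volume (x i) (x (i + 1)) := by
  have h := x_zero_lt_x_of_lt_succ hx hi
  have hqL : ContinuousOn (fun t => q i (LmInv x N i t)) (Icc (x i) (x (i + 1))) :=
    hq.comp continuous_LmInv.continuousOn (mapsTo_LmInv_Icc h (hx i hi))
  refine (((hK.mono (Icc_subset_Icc_of_lt_succ hx hi)).mul hqL).intervalIntegrable_of_Icc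
    (hx i hi).le).congr_uIoo ?_
  rw [uIoo_of_le (hx i hi).le]
  exact fun t ht => by simp only [Pi.mul_apply, hQ t (Ioo_subset_Ico_self ht)]

theorem integral_mul_eq_of_functional_eq (hx : ∀ i < N, x i < x (i + 1)) (hi : i < N)
    {K f Q : ℝ → ℝ} (hK : ContinuousOn K (Icc (x 0) (x N)))
    (hf : IntervalIntegrable f volume (x 0) (x N)) (hq : ContinuousOn (q i) (Icc (x 0) (x N)))
    (hfe : ∀ t ∈ Ico (x 0) (x N), f (Lm x N i t) = α i * f t + q i t)
    (hQ : ∀ t ∈ Ico (x i) (x (i + 1)), Q t = q i (LmInv x N i t)) :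
    ∫ t in x i..x (i + 1), K t * f t =
      aC x N i * α i * (∫ u in x 0..x N, K (Lm x N i u) * f u) +
        ∫ t in x i..x (i + 1), K t * Q t := by
  have h := x_zero_lt_x_of_lt_succ hx hi
  have hKL : ContinuousOn (fun u => K (Lm x N i u)) (Icc (x 0) (x N)) :=
    hK.comp continuous_Lm.continuousOn
      ((mapsTo_Lm_Icc h (hx i hi)).mono_right (Icc_subset_Icc_of_lt_succ hx hi))
  have hQL : ∀ u ∈ Ioo (x 0) (x N), Q (Lm x N i u) = q i u := fun u hu => by
    rw [hQ _ (Ioo_subset_Ico_self (mapsTo_Lm_Ioo h (hx i hi) hu)),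
      LmInv_Lm (aC_pos h (hx i hi)).ne']
  have hKQ : IntervalIntegrable (fun u => K (Lm x N i u) * Q (Lm x N i u)) volume (x 0) (x N) := by
    refine ((hKL.mul hq).intervalIntegrable_of_Icc h.le).congr_uIoo ?_
    rw [uIoo_of_le h.le]
    exact fun u hu => by simp only [Pi.mul_apply, hQL u hu]
  rw [← aC_mul_integral_comp_Lm h.ne (fun t => K t * f t),
    ← aC_mul_integral_comp_Lm h.ne (fun t => K t * Q t),
    intervalIntegral.integral_congr_Ioo_of_le h.le
      (g := fun u => α i * (K (Lm x N i u) * f u) + K (Lm x N i u) * Q (Lm x N i u)),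
    intervalIntegral.integral_add
      ((hf.continuousOn_mul (by rwa [uIcc_of_le h.le])).const_mul _) hKQ,
    intervalIntegral.integral_const_mul]
  · ring
  · intro u hu
    simp only [hfe u (Ioo_subset_Ico_self hu), hQL u hu]
    ring

end Integrals

theorem stmt14_general
    (N : ℕ)
    (x : ℕ → ℝ)
    (hx : ∀ i, i < N → x i < x (i + 1))
    (α : ℕ → ℝ) (hα : ∀ i, i < N → |α i| < 1)
    (q : ℕ → ℝ → ℝ)
    (hq : ∀ i, i < N → ∃ C, ∀ u ∈ Icc (x 0) (x N), ∀ v ∈ Icc (x 0) (x N),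
      |q i u - q i v| ≤ C * |u - v|)
    (f : ℝ → ℝ)
    (hfb : ∃ M, ∀ t ∈ Icc (x 0) (x N), |f t| ≤ M)
    (hfe : ∀ i, i < N → ∀ t ∈ Ico (x 0) (x N), f (Lm x N i t) = α i * f t + q i t)
    (Qf : ℝ → ℝ)
    (hQf : ∀ i, i < N → ∀ t ∈ Ico (x i) (x (i + 1)), Qf t = q i (LmInv x N i t))
    (K : ℝ → ℝ → ℝ)
    (hKc : ∀ s : ℝ, ContinuousOn (fun t => K t s) (Icc (x 0) (x N))) :
    ∀ s : ℝ,
      ∫ t in (x 0)..(x N), K t s * f t =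
        (∑ i ∈ Finset.range N,
          aC x N i * α i * ∫ t in (x 0)..(x N), K (Lm x N i t) s * f t) +
        ∫ t in (x 0)..(x N), K t s * Qf t := by
  intro s
  have hqc : ∀ i < N, ContinuousOn (q i) (Icc (x 0) (x N)) := fun i hi => by
    obtain ⟨C, hC⟩ := hq i hi
    exact (LipschitzOnWith.of_dist_le' fun u hu v hv => by
      simpa only [Real.dist_eq] using hC u hu v hv).continuousOn
  have hf := intervalIntegrable_of_functional_eq hx hα hqc hfb hfe
  have h0N := x_mono_of_lt_succ hx N.zero_le le_rfl
  have hKf : ∀ i < N, IntervalIntegrable (fun t => K t s * f t) volume (x i) (x (i + 1)) :=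
    fun i hi => (hf.continuousOn_mul (by rw [uIcc_of_le h0N]; exact hKc s)).mono_set (by
      rw [uIcc_of_le h0N, uIcc_of_le (hx i hi).le]; exact Icc_subset_Icc_of_lt_succ hx hi)
  have hKQ : ∀ i < N, IntervalIntegrable (fun t => K t s * Qf t) volume (x i) (x (i + 1)) :=
    fun i hi => intervalIntegrable_mul_of_eqOn_comp_LmInv hx hi (hKc s) (hqc i hi) (hQf i hi)
  rw [← intervalIntegral.sum_integral_adjacent_intervals hKf,
    ← intervalIntegral.sum_integral_adjacent_intervals hKQ, ← Finset.sum_add_distrib]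
  exact Finset.sum_congr rfl fun i hi => integral_mul_eq_of_functional_eq hx
    (Finset.mem_range.1 hi) (hKc s) hf (hqc i (Finset.mem_range.1 hi))
    (hfe i (Finset.mem_range.1 hi)) (hQf i (Finset.mem_range.1 hi))

/-- Functional equation for the general integral transform
`f̂(s) = ∫ K(x,s) f(x) dx` of the bounded fractal function. -/
theorem stmt14
    (N : ℕ) (hN : 2 ≤ N)
    (x : ℕ → ℝ)
    (hx : ∀ i, i < N → x i < x (i + 1))
    (α : ℕ → ℝ) (hα : ∀ i, i < N → |α i| < 1)
    (q : ℕ → ℝ → ℝ)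
    (hq : ∀ i, i < N → ∃ C, ∀ u ∈ Icc (x 0) (x N), ∀ v ∈ Icc (x 0) (x N),
      |q i u - q i v| ≤ C * |u - v|)
    (f : ℝ → ℝ)
    (hfb : ∃ M, ∀ t ∈ Icc (x 0) (x N), |f t| ≤ M)
    (hfe : ∀ i, i < N → ∀ t ∈ Ico (x 0) (x N), f (Lm x N i t) = α i * f t + q i t)
    (hfeN : f (Lm x N (N - 1) (x N)) = α (N - 1) * f (x N) + q (N - 1) (x N))
    (Qf : ℝ → ℝ)
    (hQf : ∀ i, i < N → ∀ t ∈ Ico (x i) (x (i + 1)), Qf t = q i (LmInv x N i t))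
    (hQfN : Qf (x N) = q (N - 1) (LmInv x N (N - 1) (x N)))
    (K : ℝ → ℝ → ℝ)
    (hKc : ∀ s : ℝ, ContinuousOn (fun t => K t s) (Icc (x 0) (x N)))
    (hKb : ∀ s : ℝ, ∃ M, ∀ t ∈ Icc (x 0) (x N), |K t s| ≤ M) :
    ∀ s : ℝ,
      ∫ t in (x 0)..(x N), K t s * f t =
        (∑ i ∈ Finset.range N,
          aC x N i * α i * ∫ t in (x 0)..(x N), K (Lm x N i t) s * f t) +
        ∫ t in (x 0)..(x N), K t s * Qf t :=
  stmt14_general N x hx α hα q hq f hfb hfe Qf hQf K hKc
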